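/- In the parameterization Σ = e^λ R_{θ/2} diag(e^ρ, e^{−ρ}) R_{θ/2}^T of 2×2 positive definite matrices, the density |Σ|^{−3/2} dΣ (the Jeffreys prior of the Wishart model) transforms to a density proportional to sinh ρ dλ dρ dθ. -/

import Mathlib

open Real Matrix

/-- Partial derivative in the `i`-th coordinate direction on `Fin d → ℝ`. -/
noncomputable def pderiv' {d : ℕ} (i : Fin d) (f : (Fin d → ℝ) → ℝ) (x : Fin d → ℝ) : ℝ :=
  fderiv ℝ f x (Pi.single i 1)

/-- Rotation matrix by angle `α`. -/
noncomputable def rotM (α : ℝ) : Matrix (Fin 2) (Fin 2) ℝ :=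
  !![Real.cos α, -Real.sin α; Real.sin α, Real.cos α]

/-- The parameterization `Σ(λ,ρ,θ) = e^λ R_{θ/2} diag(e^ρ, e^{−ρ}) R_{θ/2}^T`,
with `(λ,ρ,θ) = (x 0, x 1, x 2)`. -/
noncomputable def sigmaP (x : Fin 3 → ℝ) : Matrix (Fin 2) (Fin 2) ℝ :=
  Real.exp (x 0) •
    (rotM (x 2 / 2) * Matrix.diagonal ![Real.exp (x 1), Real.exp (-x 1)] * (rotM (x 2 / 2))ᵀ)

/-- The independent entries `(Σ₁₁, Σ₁₂, Σ₂₂)` of `Σ(λ,ρ,θ)` as a map `ℝ³ → ℝ³`. -/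
noncomputable def sigmaEntries (x : Fin 3 → ℝ) : Fin 3 → ℝ :=
  ![sigmaP x 0 0, sigmaP x 0 1, sigmaP x 1 1]

/-! In terms of the full angle `θ`,
`Σ = e^λ (cosh ρ · I + sinh ρ · [cos θ, sin θ; sin θ, -cos θ])`.
Hence `det Σ = e^{2λ}` (as `cosh² - sinh² = 1`), and the Jacobian of
`(λ, ρ, θ) ↦ (Σ₁₁, Σ₁₂, Σ₂₂)`, whose columns are `Σ`, `∂Σ/∂ρ` and `∂Σ/∂θ`, has determinant
`2 e^{3λ} sinh ρ`. The powers of `e^λ` cancel in `|Σ|^{-3/2} · 2 e^{3λ} sinh ρ`. -/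

lemma rotM_mul_diagonal_mul_transpose (α p q : ℝ) :
    rotM α * diagonal ![p, q] * (rotM α)ᵀ =
      !![p * cos α ^ 2 + q * sin α ^ 2, (p - q) * (cos α * sin α);
        (p - q) * (cos α * sin α), p * sin α ^ 2 + q * cos α ^ 2] := by
  ext i j
  fin_cases i <;> fin_cases j <;>
    simp [rotM, mul_apply, vecMul, dotProduct, Fin.sum_univ_two] <;> ring

lemma sigmaP_eq (x : Fin 3 → ℝ) :
    sigmaP x = exp (x 0) •
      !![cosh (x 1) + sinh (x 1) * cos (x 2), sinh (x 1) * sin (x 2);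
        sinh (x 1) * sin (x 2), cosh (x 1) - sinh (x 1) * cos (x 2)] := by
  obtain ⟨α, hα⟩ : ∃ α, x 2 = 2 * α := ⟨x 2 / 2, by ring⟩
  have hcosh : cosh (x 1) = cosh (x 1) * (cos α ^ 2 + sin α ^ 2) := by
    rw [cos_sq_add_sin_sq, mul_one]
  rw [sigmaP, rotM_mul_diagonal_mul_transpose, hα, mul_div_cancel_left₀ α two_ne_zero,
    cos_two_mul', sin_two_mul, hcosh, cosh_eq, sinh_eq]
  congr 1
  ext i j
  fin_cases i <;> fin_cases j <;> simp [-cos_sq_add_sin_sq] <;> ring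

lemma det_sigmaP (x : Fin 3 → ℝ) : (sigmaP x).det = exp (x 0) ^ 2 := by
  rw [sigmaP_eq, det_smul, det_fin_two_of, Fintype.card_fin]
  linear_combination exp (x 0) ^ 2 * (cosh_sq_sub_sinh_sq (x 1)
    - sinh (x 1) ^ 2 * cos_sq_add_sin_sq (x 2))

lemma HasFDerivAt.pderiv'_eq {d : ℕ} {i : Fin d} {f : (Fin d → ℝ) → ℝ} {x : Fin d → ℝ}
    {L : (Fin d → ℝ) →L[ℝ] ℝ} (h : HasFDerivAt f L x) :
    pderiv' i f x = L (Pi.single i 1) := by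
  rw [pderiv', h.fderiv]

lemma pderiv'_exp_mul_add_mul {a b q : ℝ → ℝ} {a' b' q' : ℝ} {x : Fin 3 → ℝ}
    (ha : HasDerivAt a a' (x 1)) (hb : HasDerivAt b b' (x 1)) (hq : HasDerivAt q q' (x 2))
    (i : Fin 3) :
    pderiv' i (fun y => exp (y 0) * (a (y 1) + b (y 1) * q (y 2))) x =
      exp (x 0) * ![a (x 1) + b (x 1) * q (x 2), a' + b' * q (x 2), b (x 1) * q'] i := by
  have hy (j : Fin 3) := hasFDerivAt_apply (𝕜 := ℝ) (F' := fun _ => ℝ) j x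
  have h : HasFDerivAt (fun y => exp (y 0) * (a (y 1) + b (y 1) * q (y 2))) _ x :=
    (hy 0).exp.mul ((ha.comp_hasFDerivAt x (hy 1)).add
      ((hb.comp_hasFDerivAt x (hy 1)).mul (hq.comp_hasFDerivAt x (hy 2))))
  rw [h.pderiv'_eq]
  fin_cases i <;> simp <;> ring

lemma det_jacobian_sigmaEntries (x : Fin 3 → ℝ) :
    (of fun a b : Fin 3 => pderiv' b (fun y => sigmaEntries y a) x).det =
      2 * exp (x 0) ^ 3 * sinh (x 1) := by
  -- each entry in the shape of `pderiv'_exp_mul_add_mul`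
  have e0 : (fun y => sigmaEntries y 0) = fun y => exp (y 0) *
      (cosh (y 1) + sinh (y 1) * cos (y 2)) := by
    ext y; simp [sigmaEntries, sigmaP_eq]
  have e1 : (fun y => sigmaEntries y 1) = fun y => exp (y 0) *
      (0 + sinh (y 1) * sin (y 2)) := by
    ext y; simp [sigmaEntries, sigmaP_eq]
  have e2 : (fun y => sigmaEntries y 2) = fun y => exp (y 0) *
      (cosh (y 1) + sinh (y 1) * (-cos) (y 2)) := by
    ext y; simp [sigmaEntries, sigmaP_eq]; ring
  have hcosh := hasDerivAt_cosh (x 1)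
  have hsinh := hasDerivAt_sinh (x 1)
  simp only [det_fin_three, of_apply, e0, e1, e2,
    pderiv'_exp_mul_add_mul hcosh hsinh (hasDerivAt_cos (x 2)),
    pderiv'_exp_mul_add_mul (hasDerivAt_const (x 1) 0) hsinh (hasDerivAt_sin (x 2)),
    pderiv'_exp_mul_add_mul hcosh hsinh (hasDerivAt_cos (x 2)).neg]
  simp only [cons_val_zero, cons_val_one, cons_val, Pi.neg_apply]
  linear_combination 2 * exp (x 0) ^ 3 * sinh (x 1) *
    ((cosh (x 1) ^ 2 - sinh (x 1) ^ 2) * cos_sq_add_sin_sq (x 2) + cosh_sq_sub_sinh_sq (x 1))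

lemma sq_rpow_neg_three_halves {a : ℝ} (ha : 0 ≤ a) :
    (a ^ 2) ^ (-(3 : ℝ) / 2) = (a ^ 3)⁻¹ := by
  rw [← rpow_natCast, ← rpow_mul ha, ← rpow_natCast, ← rpow_neg ha]
  norm_num

/-- in the parameterization `Σ = e^λ R_{θ/2} diag(e^ρ, e^{−ρ}) R_{θ/2}^T`, the
Jeffreys density `|Σ|^{−3/2} dΣ` transforms to a density proportional to `sinh ρ dλ dρ dθ`:
`|Σ|^{−3/2} |det(∂Σ/∂(λ,ρ,θ))| = c sinh ρ` for a constant `c > 0`. -/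
theorem stmt15 :
    ∃ c : ℝ, 0 < c ∧ ∀ x : Fin 3 → ℝ, 0 < x 1 →
      (sigmaP x).det ^ (-(3 : ℝ) / 2) *
          |(Matrix.of fun a b : Fin 3 => pderiv' b (fun y => sigmaEntries y a) x).det|
        = c * Real.sinh (x 1) := by
  refine ⟨2, two_pos, fun x hx => ?_⟩
  have hsinh : 0 < sinh (x 1) := sinh_pos_iff.mpr hx
  rw [det_sigmaP, det_jacobian_sigmaEntries, abs_of_pos (by positivity),
    sq_rpow_neg_three_halves (exp_pos _).le]
  field_simp
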